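/- Every k-alternating function f: {0,1}^n → {0,1} (k ≥ 1) has total influence Inf[f] ≤ k·√n. -/

import Mathlib

/-- Number of alternations of `f` along the chain `X` of `ℓ+1` points:
the number of indices `j` with `f (X j) ≠ f (X (j+1))`. -/
def altCount {n : ℕ} (f : (Fin n → Bool) → Bool) {ℓ : ℕ}
    (X : Fin (ℓ + 1) → (Fin n → Bool)) : ℕ :=
  (Finset.univ.filter (fun j : Fin ℓ => f (X j.castSucc) ≠ f (X j.succ))).card

/-- `a_f(x)`: the maximum number of alternations of `f` over all
(strictly increasing) chains in `{0,1}^n` starting at `x`. -/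
noncomputable def altFrom {n : ℕ} (f : (Fin n → Bool) → Bool) (x : Fin n → Bool) : ℕ :=
  sSup {k | ∃ (ℓ : ℕ) (X : Fin (ℓ + 1) → (Fin n → Bool)),
    StrictMono X ∧ X 0 = x ∧ altCount f X = k}

/-- `a(f)`: the maximum number of alternations of `f` over all
(strictly increasing) chains in `{0,1}^n`. -/
noncomputable def alt {n : ℕ} (f : (Fin n → Bool) → Bool) : ℕ :=
  sSup {k | ∃ (ℓ : ℕ) (X : Fin (ℓ + 1) → (Fin n → Bool)),
    StrictMono X ∧ altCount f X = k}

/-- `Inf_i[f] = Pr_x[f(x) ≠ f(x^{⊕ i})]`, the influence of coordinate `i` on `f`. -/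
noncomputable def influence {n : ℕ} (i : Fin n) (f : (Fin n → Bool) → Bool) : ℝ :=
  ((Finset.univ.filter (fun x : Fin n → Bool =>
      f x ≠ f (Function.update x i (!(x i))))).card : ℝ) / 2 ^ n

/-- `Inf[f] = ∑ i, Inf_i[f]`, the total influence of `f`. -/
noncomputable def totalInfluence {n : ℕ} (f : (Fin n → Bool) → Bool) : ℝ :=
  ∑ i : Fin n, influence i f

/-!
Double counting over maximal chains, as in the LYM inequality. A maximal chain of `{0,1}^n`
consists of `n` edges, and at most `a(f)` of them are sensitive (`f` differs at their endpoints);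
an edge whose lower endpoint has weight `w` lies on `w! (n-1-w)!` of the `n!` maximal chains. Hence
`∑ w! (n-1-w)! ≤ a(f) n!`, the sum running over the sensitive edges; this is proved by induction
on the first step of the chains, starting from an arbitrary point `x` instead of `⊥`. Since
`w! (n-1-w)! = (n-1)! / C(n-1, w)` and `√n C(n-1, w) ≤ 2^(n-1)`, each sensitive edge contributes
at least `2 n! / (√n 2^n)`, while `Inf[f] = 2 #(sensitive edges) / 2^n`.
-/

open Finset Function Nat

section Cube

variable {ι : Type*}

lemma update_true_le_iff [DecidableEq ι] {x y : ι → Bool} {m : ι} (hm : x m = false) :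
    update x m true ≤ y ↔ x ≤ y ∧ y m = true := by
  rw [update_le_iff]
  refine ⟨fun ⟨hmy, hle⟩ => ⟨fun j => ?_, top_le_iff.mp hmy⟩,
    fun ⟨hle, hmy⟩ => ⟨hmy.ge, fun j _ => hle j⟩⟩
  by_cases hj : j = m
  · simp [hj, hm]
  · exact hle j hj

variable [Fintype ι]

def weight (x : ι → Bool) : ℕ := #{i | x i = true}

lemma weight_le_card (x : ι → Bool) : weight x ≤ Fintype.card ι := card_filter_le _ _

lemma card_filter_eq_false (x : ι → Bool) :
    #{i | x i = false} = Fintype.card ι - weight x := by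
  classical
  rw [weight, ← card_compl]
  congr 1; ext i; simp

lemma filter_true_subset_of_le {x y : ι → Bool} (hxy : x ≤ y) :
    univ.filter (x · = true) ⊆ univ.filter (y · = true) := fun i hi => by
  simp only [mem_filter, mem_univ, true_and] at hi ⊢
  exact Bool.le_iff_imp.mp (hxy i) hi

lemma weight_strictMono : StrictMono (weight : (ι → Bool) → ℕ) := by
  intro x y hxy
  obtain ⟨hle, i, hi⟩ := Pi.lt_def.mp hxy
  refine card_lt_card ((ssubset_iff_of_subset (filter_true_subset_of_le hle)).mpr ⟨i, ?_⟩)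
  simpa [and_comm] using Bool.lt_iff.mp hi

lemma card_filter_false_true_of_le {x y : ι → Bool} (hxy : x ≤ y) :
    #{m | x m = false ∧ y m = true} = weight y - weight x := by
  classical
  rw [weight, weight, ← card_sdiff_of_subset (filter_true_subset_of_le hxy)]
  congr 1; ext i; simp [and_comm]

lemma length_le_card_of_strictMono {ℓ : ℕ} {X : Fin (ℓ + 1) → ι → Bool} (hX : StrictMono X) :
    ℓ ≤ Fintype.card ι := by
  have := card_le_card_of_injOn (fun j => weight (X j)) (s := univ)
    (t := range (Fintype.card ι + 1))
    (fun j _ => by simpa [Nat.lt_succ_iff] using weight_le_card (X j))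
    (weight_strictMono.comp hX).injective.injOn
  simpa using this

variable [DecidableEq ι]

instance : DecidableLE (ι → Bool) := fun _ _ => Fintype.decidableForallFintype

lemma weight_update_true {x : ι → Bool} {m : ι} (hm : x m = false) :
    weight (update x m true) = weight x + 1 := by
  have : univ.filter (update x m true · = true) = insert m (univ.filter (x · = true)) := by
    ext i; by_cases h : i = m <;> simp [h, update_apply]
  rw [weight, this, card_insert_of_notMem (by simp [hm]), weight]

lemma weight_lt_card_of_eq_false {x : ι → Bool} {i : ι} (hi : x i = false) :
    weight x < Fintype.card ι :=
  Nat.lt_of_succ_le ((weight_update_true hi).symm.trans_le (weight_le_card _))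

-- `(weight y - weight x)!` counts the maximal chains from `x` to `y`; split them by their first step.
lemma factorial_weight_sub_eq_sum {x y : ι → Bool} (hxy : x < y) :
    (weight y - weight x)! =
      ∑ m with x m = false ∧ y m = true, (weight y - weight (update x m true))! := by
  have hw := weight_strictMono hxy
  rw [sum_congr rfl fun m hm => by rw [weight_update_true (mem_filter.mp hm).2.1], sum_const,
    card_filter_false_true_of_le hxy.le, smul_eq_mul, Nat.sub_add_eq,
    Nat.mul_factorial_pred (by omega)]

lemma sum_factorial_weight_sub_eq (L : Finset (ι → Bool)) (g : (ι → Bool) → ℕ) (x : ι → Bool) :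
    ∑ y ∈ L with x ≤ y, (weight y - weight x)! * g y =
      (if x ∈ L then g x else 0) + ∑ m with x m = false,
        ∑ y ∈ L with update x m true ≤ y, (weight y - weight (update x m true))! * g y := by
  rw [← sum_filter_add_sum_filter_not _ (· = x)]
  congr 1
  · rw [filter_filter, filter_congr fun y _ => and_iff_right_of_imp fun h : y = x => h.ge,
      sum_filter, sum_ite_eq']
    simp
  calc _ = ∑ y ∈ L with x ≤ y ∧ y ≠ x, ∑ m with x m = false ∧ y m = true,
          (weight y - weight (update x m true))! * g y := by
        rw [filter_filter]
        refine sum_congr rfl fun y hy => ?_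
        obtain ⟨-, hxy, hne⟩ := mem_filter.mp hy
        rw [factorial_weight_sub_eq_sum (lt_of_le_of_ne hxy (Ne.symm hne)), sum_mul]
    _ = _ := sum_comm' fun y m => by
        by_cases hm : x m = false
        · simp only [mem_filter, mem_univ, true_and, update_true_le_iff hm, hm]
          constructor
          · tauto
          · rintro ⟨⟨hL, hxy, hy⟩, -⟩
            exact ⟨⟨hL, hxy, by rintro rfl; simp_all⟩, hy⟩
        · simp [hm]

end Cube

section SensitiveEdges

variable {ι : Type*} [Fintype ι] [DecidableEq ι] (f : (ι → Bool) → Bool)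

-- An edge `{x, update x i true}` of the cube is represented by its lower endpoint `x`.
def sensitiveEdges (i : ι) : Finset (ι → Bool) :=
  {x | x i = false ∧ f x ≠ f (update x i true)}

lemma card_filter_ne_flip (i : ι) :
    #{x | f x ≠ f (update x i (!x i))} = 2 * #(sensitiveEdges f i) := by
  rw [← card_filter_add_card_filter_not (· i = false), filter_filter, filter_filter, two_mul]
  congr 1
  · congr 1; ext x; by_cases hx : x i <;> simp [sensitiveEdges, hx]
  · refine card_nbij' (fun x => update x i (!x i)) (fun x => update x i (!x i)) ?_ ?_ ?_ ?_ <;>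
      intro x hx <;> simp only [sensitiveEdges, coe_filter] at hx ⊢ <;>
      cases hxi : x i <;> simp_all [update_idem] <;> rw [← hxi, update_eq_self] <;> exact Ne.symm hx

-- The factor `(weight y - weight x)! * (card ι - 1 - weight y)!` is the number of maximal chains
-- from `x` to `⊤` through the edge at `y` in direction `i`.
def sensitiveChainCount (x : ι → Bool) : ℕ :=
  ∑ i, ∑ y ∈ sensitiveEdges f i with x ≤ y,
    (weight y - weight x)! * (Fintype.card ι - 1 - weight y)!

lemma sensitiveChainCount_eq (x : ι → Bool) :
    sensitiveChainCount f x = ∑ m with x m = false,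
      ((if f x ≠ f (update x m true) then 1 else 0) * (Fintype.card ι - 1 - weight x)! +
        sensitiveChainCount f (update x m true)) := by
  rw [sensitiveChainCount, sum_congr rfl fun i _ => sum_factorial_weight_sub_eq _ _ x,
    sum_add_distrib, sum_add_distrib, sum_comm (s := univ)]
  congr 1
  rw [sum_filter]
  refine sum_congr rfl fun m _ => ?_
  by_cases hm : x m = false <;> simp [sensitiveEdges, hm]

lemma sensitiveChainCount_bot :
    sensitiveChainCount f ⊥ =
      ∑ i, ∑ y ∈ sensitiveEdges f i, (weight y)! * (Fintype.card ι - 1 - weight y)! := by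
  simp [sensitiveChainCount, weight]

end SensitiveEdges

section Alternation

variable {n : ℕ} (f : (Fin n → Bool) → Bool)

lemma altCount_le_of_strictMono {ℓ : ℕ} {X : Fin (ℓ + 1) → Fin n → Bool} (hX : StrictMono X) :
    altCount f X ≤ n :=
  ((card_filter_le _ _).trans (by simp)).trans ((length_le_card_of_strictMono hX).trans (by simp))

lemma altCount_vecCons {ℓ : ℕ} (x : Fin n → Bool) (X : Fin (ℓ + 1) → Fin n → Bool) :
    altCount f (Matrix.vecCons x X) = (if f x ≠ f (X 0) then 1 else 0) + altCount f X := by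
  simp only [altCount, card_filter, Fin.sum_univ_succ]
  rfl

lemma bddAbove_altFrom (x : Fin n → Bool) :
    BddAbove {k | ∃ (ℓ : ℕ) (X : Fin (ℓ + 1) → (Fin n → Bool)),
      StrictMono X ∧ X 0 = x ∧ altCount f X = k} :=
  ⟨n, by rintro _ ⟨ℓ, X, hX, -, rfl⟩; exact altCount_le_of_strictMono f hX⟩

lemma altCount_le_altFrom {ℓ : ℕ} {X : Fin (ℓ + 1) → Fin n → Bool} (hX : StrictMono X) :
    altCount f X ≤ altFrom f (X 0) :=
  le_csSup (bddAbove_altFrom f _) ⟨ℓ, X, hX, rfl, rfl⟩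

lemma altCount_le_alt {ℓ : ℕ} {X : Fin (ℓ + 1) → Fin n → Bool} (hX : StrictMono X) :
    altCount f X ≤ alt f :=
  le_csSup ⟨n, by rintro _ ⟨ℓ, X, hX, rfl⟩; exact altCount_le_of_strictMono f hX⟩ ⟨ℓ, X, hX, rfl⟩

lemma exists_chain_altFrom (x : Fin n → Bool) :
    ∃ (ℓ : ℕ) (X : Fin (ℓ + 1) → Fin n → Bool),
      StrictMono X ∧ X 0 = x ∧ altCount f X = altFrom f x :=
  Nat.sSup_mem ⟨_, by exact ⟨0, ![x], strictMono_vecEmpty, rfl, rfl⟩⟩ (bddAbove_altFrom f x)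

lemma altFrom_le_alt (x : Fin n → Bool) : altFrom f x ≤ alt f := by
  obtain ⟨ℓ, X, hX, -, hXalt⟩ := exists_chain_altFrom f x
  exact hXalt ▸ altCount_le_alt f hX

lemma add_altFrom_le {x y : Fin n → Bool} (hxy : x < y) :
    (if f x ≠ f y then 1 else 0) + altFrom f y ≤ altFrom f x := by
  obtain ⟨ℓ, X, hX, rfl, hXalt⟩ := exists_chain_altFrom f y
  simpa [altCount_vecCons, hXalt] using altCount_le_altFrom f (hX.vecCons hxy)

theorem sensitiveChainCount_le (x : Fin n → Bool) :
    sensitiveChainCount f x ≤ altFrom f x * (n - weight x)! := by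
  induction x using WellFoundedGT.induction with
  | _ x ih =>
  rw [sensitiveChainCount_eq, Fintype.card_fin]
  calc _ ≤ ∑ m with x m = false, altFrom f x * (n - 1 - weight x)! := sum_le_sum fun m hm => ?_
    _ = (n - weight x) * (n - weight x - 1)! * altFrom f x := by
      rw [sum_const, card_filter_eq_false, Fintype.card_fin, smul_eq_mul, Nat.sub_right_comm]
      ring
    _ ≤ altFrom f x * (n - weight x)! := by
      rcases eq_or_ne (n - weight x) 0 with h | h
      · simp [h]
      · rw [Nat.mul_factorial_pred h, mul_comm]
  have hm : x m = false := (mem_filter.mp hm).2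
  have hlt : x < update x m true := lt_update_self_iff.mpr (by simp [hm])
  calc _ ≤ (if f x ≠ f (update x m true) then 1 else 0) * (n - 1 - weight x)! +
        altFrom f (update x m true) * (n - weight (update x m true))! :=
        Nat.add_le_add_left (ih _ hlt) _
    _ = ((if f x ≠ f (update x m true) then 1 else 0) + altFrom f (update x m true)) *
        (n - 1 - weight x)! := by
      rw [weight_update_true hm, add_mul, Nat.sub_add_eq, Nat.sub_right_comm]
    _ ≤ altFrom f x * (n - 1 - weight x)! := Nat.mul_le_mul_right _ (add_altFrom_le f hlt)

end Alternation

lemma two_mul_add_one_mul_centralBinom_sq_le (a : ℕ) :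
    (2 * a + 1) * a.centralBinom ^ 2 ≤ 4 ^ (2 * a) := by
  induction a with
  | zero => simp
  | succ a ih =>
    have hsucc := succ_mul_centralBinom_succ a
    have key : (a + 1) ^ 2 * ((2 * (a + 1) + 1) * (a + 1).centralBinom ^ 2) ≤
        (a + 1) ^ 2 * 4 ^ (2 * (a + 1)) :=
      calc _ = (2 * a + 3) * ((a + 1) * (a + 1).centralBinom) ^ 2 := by ring
        _ = (2 * a + 3) * (4 * (2 * a + 1)) * ((2 * a + 1) * a.centralBinom ^ 2) := by
            rw [hsucc]; ring
        _ ≤ (16 * (a + 1) ^ 2) * 4 ^ (2 * a) := Nat.mul_le_mul (by nlinarith) ih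
        _ = _ := by ring
    exact Nat.le_of_mul_le_mul_left key (by positivity)

lemma succ_mul_choose_sq_le (m j : ℕ) : (m + 1) * m.choose j ^ 2 ≤ 4 ^ m := by
  refine (Nat.mul_le_mul_left _ (Nat.pow_le_pow_left (choose_le_middle j m) 2)).trans ?_
  obtain ⟨a, rfl | rfl⟩ := Nat.even_or_odd' m
  · rw [Nat.mul_div_cancel_left _ two_pos, ← centralBinom_eq_two_mul_choose]
    exact two_mul_add_one_mul_centralBinom_sq_le a
  · have hhalf : 2 * (2 * a + 1).choose a = (a + 1).centralBinom := by
      rw [centralBinom_eq_two_mul_choose, show 2 * (a + 1) = 2 * a + 1 + 1 by ring,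
        choose_succ_succ, choose_symm_half]
      ring
    rw [show (2 * a + 1) / 2 = a by omega]
    refine Nat.le_of_mul_le_mul_left (c := 4) ?_ (by norm_num)
    calc 4 * ((2 * a + 1 + 1) * (2 * a + 1).choose a ^ 2)
        = (2 * a + 2) * (a + 1).centralBinom ^ 2 := by rw [← hhalf]; ring
      _ ≤ (2 * (a + 1) + 1) * (a + 1).centralBinom ^ 2 := Nat.mul_le_mul_right _ (by omega)
      _ ≤ 4 ^ (2 * (a + 1)) := two_mul_add_one_mul_centralBinom_sq_le (a + 1)
      _ = 4 * 4 ^ (2 * a + 1) := by ring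

lemma sqrt_succ_mul_choose_le (m j : ℕ) : √(m + 1) * m.choose j ≤ 2 ^ m := by
  calc √(m + 1) * m.choose j = √((m + 1) * m.choose j ^ 2) := by
        rw [Real.sqrt_mul (by positivity), Real.sqrt_sq (by positivity)]
    _ ≤ √(4 ^ m) := Real.sqrt_le_sqrt (by exact_mod_cast succ_mul_choose_sq_le m j)
    _ = 2 ^ m := by
        rw [show (4 : ℝ) ^ m = (2 ^ m) ^ 2 by rw [← pow_mul, mul_comm, pow_mul]; norm_num,
          Real.sqrt_sq (by positivity)]

lemma factorial_succ_le_sqrt_mul {m w : ℕ} (hw : w ≤ m) :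
    ((m + 1)! : ℝ) ≤ √(m + 1) * 2 ^ m * (w ! * (m - w)! : ℕ) := by
  have hsqrt : ((m + 1 : ℕ) : ℝ) = √(m + 1) * √(m + 1) := by
    push_cast; exact (Real.mul_self_sqrt (by positivity)).symm
  calc ((m + 1)! : ℝ) = √(m + 1) * (√(m + 1) * m.choose w) * (w ! * (m - w)! : ℕ) := by
        rw [factorial_succ, ← choose_mul_factorial_mul_factorial hw]; push_cast [hsqrt]; ring
    _ ≤ √(m + 1) * 2 ^ m * (w ! * (m - w)! : ℕ) := by
        gcongr; exact sqrt_succ_mul_choose_le m w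

lemma influence_eq {n : ℕ} (f : (Fin n → Bool) → Bool) (i : Fin n) :
    influence i f = 2 * #(sensitiveEdges f i) / 2 ^ n := by
  rw [influence, card_filter_ne_flip]; push_cast; rfl

theorem totalInfluence_le_alt_mul_sqrt {n : ℕ} (f : (Fin n → Bool) → Bool) :
    totalInfluence f ≤ alt f * √n := by
  rcases n with _ | m
  · simp [totalInfluence]
  have hedge : ∀ i, ∀ y ∈ sensitiveEdges f i,
      ((m + 1)! : ℝ) ≤ √(m + 1) * 2 ^ m * ((weight y)! * (m - weight y)! : ℕ) := fun i y hy => by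
    have := weight_lt_card_of_eq_false (mem_filter.mp hy).2.1
    exact factorial_succ_le_sqrt_mul (by simpa [Nat.lt_succ_iff] using this)
  have hchain : sensitiveChainCount f ⊥ ≤ alt f * (m + 1)! := by
    simpa [weight] using
      (sensitiveChainCount_le f ⊥).trans (Nat.mul_le_mul_right _ (altFrom_le_alt f ⊥))
  have hcount : (∑ i, #(sensitiveEdges f i) : ℝ) * (m + 1)! ≤
      √(m + 1) * 2 ^ m * (alt f * (m + 1)!) :=
    calc _ = ∑ i, ∑ y ∈ sensitiveEdges f i, ((m + 1)! : ℝ) := by simp [sum_mul]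
      _ ≤ ∑ i, ∑ y ∈ sensitiveEdges f i,
          √(m + 1) * 2 ^ m * ((weight y)! * (m - weight y)! : ℕ) :=
        sum_le_sum fun i _ => sum_le_sum (hedge i)
      _ = √(m + 1) * 2 ^ m * sensitiveChainCount f ⊥ := by
        rw [sensitiveChainCount_bot]; push_cast; simp [mul_sum]
      _ ≤ √(m + 1) * 2 ^ m * (alt f * (m + 1)!) := by gcongr; exact_mod_cast hchain
  have htotal : totalInfluence f = (∑ i, #(sensitiveEdges f i) : ℝ) / 2 ^ m := by
    simp only [totalInfluence, influence_eq, ← sum_div, ← mul_sum, pow_succ]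
    field_simp
  rw [htotal, div_le_iff₀ (by positivity)]
  push_cast
  exact le_of_mul_le_mul_right (hcount.trans_eq (by ring)) (by positivity)

theorem stmt11_general {n : ℕ} (k : ℕ) (f : (Fin n → Bool) → Bool)
    (hf : alt f ≤ k) :
    totalInfluence f ≤ (k : ℝ) * Real.sqrt n :=
  (totalInfluence_le_alt_mul_sqrt f).trans (by gcongr)

/-- Every `k`-alternating `f : {0,1}^n → {0,1}` (with `k ≥ 1`) has total influence
`Inf[f] ≤ k √n`. -/
theorem stmt11 {n : ℕ} (k : ℕ) (hk : 1 ≤ k) (f : (Fin n → Bool) → Bool)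
    (hf : alt f ≤ k) :
    totalInfluence f ≤ (k : ℝ) * Real.sqrt n :=
  stmt11_general k f hf
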